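/- One has bar-α_{n−1} = 1 and, for every i ∈ {κ+1, …, n−2}, bar-α_i = min(bar-α_{i+1}/ρ_{i+1}, 1). In particular, bar-α_i ≤ 1 for all i ∈ {0, …, n−1}. -/
import Mathlib


open Finset

/-- `rhoProd ρ k j = ∏_{i=k+1}^{j} ρ i`. -/
noncomputable def rhoProd (ρ : ℕ → ℝ) (k j : ℕ) : ℝ := ∏ i ∈ Finset.Icc (k + 1) j, ρ i

/-- `k` is a binding index: `k ∈ {κ+1, …, n-1}` and `ρ_{k,j} < 1` for all `j ∈ {k+1, …, n-1}`. -/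
def Binding (ρ : ℕ → ℝ) (n κ k : ℕ) : Prop :=
  κ + 1 ≤ k ∧ k ≤ n - 1 ∧ ∀ j, k + 1 ≤ j → j ≤ n - 1 → rhoProd ρ k j < 1

/-- `kmin ρ n κ i = min {k ∈ H : k ≥ i}`, the smallest binding index `≥ i`. -/
noncomputable def kmin (ρ : ℕ → ℝ) (n κ i : ℕ) : ℕ :=
  sInf {k | Binding ρ n κ k ∧ i ≤ k}

/-- `bar-α_i`: equals `α i` for `i ≤ κ` and `(ρ_{i, k(i)})⁻¹` for `i > κ`. -/
noncomputable def barAlpha (ρ α : ℕ → ℝ) (n κ i : ℕ) : ℝ :=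
  if i ≤ κ then α i else (rhoProd ρ i (kmin ρ n κ i))⁻¹

lemma rhoProd_self (ρ : ℕ → ℝ) (k : ℕ) : rhoProd ρ k k = 1 := by
  simp [rhoProd]

lemma rhoProd_pos {n : ℕ} {ρ : ℕ → ℝ} (hρ : ∀ i, 1 ≤ i → i ≤ n → 0 < ρ i)
    (k : ℕ) {j : ℕ} (hj : j ≤ n) : 0 < rhoProd ρ k j := by
  apply Finset.prod_pos
  intro i hi
  simp only [Finset.mem_Icc] at hi
  exact hρ i (by omega) (by omega)

lemma rhoProd_mul (ρ : ℕ → ℝ) {k m j : ℕ} (h1 : k ≤ m) (h2 : m ≤ j) :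
    rhoProd ρ k j = rhoProd ρ k m * rhoProd ρ m j := by
  simp only [rhoProd, Finset.Icc_add_one_left_eq_Ioc]
  exact (Finset.prod_Ioc_consecutive _ h1 h2).symm

lemma rhoProd_succ (ρ : ℕ → ℝ) (i : ℕ) : rhoProd ρ i (i + 1) = ρ (i + 1) := by
  simp [rhoProd]

lemma binding_top {ρ : ℕ → ℝ} {n κ : ℕ} (hn : 2 ≤ n) (hκ : κ ≤ n - 2) :
    Binding ρ n κ (n - 1) :=
  ⟨by omega, le_refl _, fun j hj1 hj2 => by omega⟩

lemma kmin_mem {ρ : ℕ → ℝ} {n κ i : ℕ} (hn : 2 ≤ n) (hκ : κ ≤ n - 2) (hi : i ≤ n - 1) :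
    Binding ρ n κ (kmin ρ n κ i) ∧ i ≤ kmin ρ n κ i :=
  Nat.sInf_mem (⟨n - 1, binding_top hn hκ, hi⟩ : Set.Nonempty {k | Binding ρ n κ k ∧ i ≤ k})

lemma kmin_le {ρ : ℕ → ℝ} {n κ i k : ℕ} (hk : Binding ρ n κ k) (hik : i ≤ k) :
    kmin ρ n κ i ≤ k := Nat.sInf_le ⟨hk, hik⟩

/-- Key lemma: `ρ_{i, k(i)} ≥ 1` for `i ∈ [κ+1, n-1]`. -/
lemma one_le_rhoProd_kmin {n : ℕ} (hn : 2 ≤ n) {ρ : ℕ → ℝ}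
    (hρ : ∀ i, 1 ≤ i → i ≤ n → 0 < ρ i) {κ i : ℕ} (hκi : κ + 1 ≤ i) (hi : i ≤ n - 1) :
    1 ≤ rhoProd ρ i (kmin ρ n κ i) := by
  have hκ : κ ≤ n - 2 := by omega
  set F := Finset.Icc i (n - 1) with hF
  have hiF : i ∈ F := by simp only [hF, Finset.mem_Icc]; omega
  obtain ⟨b, hbF, hbmax⟩ := F.exists_max_image (fun j => rhoProd ρ i j) ⟨i, hiF⟩
  set G := F.filter (fun j => ∀ l ∈ F, rhoProd ρ i l ≤ rhoProd ρ i j) with hG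
  have hGne : G.Nonempty := ⟨b, Finset.mem_filter.2 ⟨hbF, hbmax⟩⟩
  set j := G.max' hGne with hj
  have hjG : j ∈ G := G.max'_mem hGne
  obtain ⟨hjF, hjmax⟩ := Finset.mem_filter.1 hjG
  rw [hF, Finset.mem_Icc] at hjF
  have h1j : 1 ≤ rhoProd ρ i j := by
    have := hjmax i hiF
    rwa [rhoProd_self] at this
  have hjb : Binding ρ n κ j := by
    refine ⟨by omega, hjF.2, fun l hl1 hl2 => ?_⟩
    have hlF : l ∈ F := by simp only [hF, Finset.mem_Icc]; omega
    have hle : rhoProd ρ i l ≤ rhoProd ρ i j := hjmax l hlF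
    have hsplit : rhoProd ρ i l = rhoProd ρ i j * rhoProd ρ j l :=
      rhoProd_mul ρ (by omega) (by omega)
    have hpos : 0 < rhoProd ρ i j := lt_of_lt_of_le one_pos h1j
    by_contra hcon
    push_neg at hcon
    have hle1 : rhoProd ρ j l ≤ 1 := by nlinarith
    have heq : rhoProd ρ j l = 1 := le_antisymm hle1 hcon
    have heql : rhoProd ρ i l = rhoProd ρ i j := by rw [hsplit, heq, mul_one]
    have hlG : l ∈ G := by
      refine Finset.mem_filter.2 ⟨hlF, fun l' hl' => ?_⟩
      rw [heql]; exact hjmax l' hl'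
    have := G.le_max' l hlG
    omega
  set k := kmin ρ n κ i with hk
  have hkj : k ≤ j := kmin_le hjb hjF.1
  obtain ⟨hkb, hik⟩ := kmin_mem hn hκ hi
  rcases eq_or_lt_of_le hkj with heq | hlt
  · rw [heq]; exact h1j
  · have h1 : rhoProd ρ k j < 1 := hkb.2.2 j (by omega) hjF.2
    have hsplit : rhoProd ρ i j = rhoProd ρ i k * rhoProd ρ k j :=
      rhoProd_mul ρ hik (le_of_lt hlt)
    have hkpos : 0 < rhoProd ρ i k := rhoProd_pos hρ _ (by omega)
    have hkjpos : 0 < rhoProd ρ k j := rhoProd_pos hρ _ (by omega)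
    nlinarith

lemma kmin_top {ρ : ℕ → ℝ} {n κ : ℕ} (hn : 2 ≤ n) (hκ : κ ≤ n - 2) :
    kmin ρ n κ (n - 1) = n - 1 := by
  obtain ⟨hb, hge⟩ := kmin_mem (ρ := ρ) (i := n - 1) hn hκ le_rfl
  exact le_antisymm hb.2.1 hge

theorem stmt5 (n : ℕ) (hn : 2 ≤ n) (ρ α : ℕ → ℝ)
    (hρ : ∀ i, 1 ≤ i → i ≤ n → 0 < ρ i)
    (hα0pos : 0 < α 0) (hα0le : α 0 ≤ 1)
    (hrec : ∀ k, 1 ≤ k → k ≤ n → α k = min (α (k - 1) * ρ k) 1)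
    (κ : ℕ) (hκle : κ ≤ n - 1) (hκ1 : α κ = 1)
    (hκmax : ∀ k, k ≤ n - 1 → α k = 1 → k ≤ κ) :
    barAlpha ρ α n κ (n - 1) = 1 ∧
      (∀ i, κ + 1 ≤ i → i ≤ n - 2 →
        barAlpha ρ α n κ i = min (barAlpha ρ α n κ (i + 1) / ρ (i + 1)) 1) ∧
      ∀ i, i ≤ n - 1 → barAlpha ρ α n κ i ≤ 1 := by
  have halle : ∀ k, k ≤ n → α k ≤ 1 := by
    intro k hk
    match k with
    | 0 => exact hα0le
    | m + 1 => rw [hrec (m + 1) (by omega) hk]; exact min_le_right _ _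
  refine ⟨?_, ?_, ?_⟩
  · -- barAlpha at n-1 equals 1
    rcases le_or_gt (n - 1) κ with hle | hlt
    · have : κ = n - 1 := le_antisymm hκle hle
      rw [barAlpha, if_pos hle, ← this, hκ1]
    · have hκ2 : κ ≤ n - 2 := by omega
      rw [barAlpha, if_neg (by omega), kmin_top hn hκ2, rhoProd_self, inv_one]
  · -- recursion
    intro i hi1 hi2
    have hκ2 : κ ≤ n - 2 := by omega
    have hρpos : 0 < ρ (i + 1) := hρ (i + 1) (by omega) (by omega)
    obtain ⟨hk2b, hk2ge⟩ := kmin_mem (ρ := ρ) (κ := κ) (i := i + 1) hn hκ2 (by omega)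
    set k2 := kmin ρ n κ (i + 1) with hk2
    have hk2le : k2 ≤ n - 1 := hk2b.2.1
    have hq : rhoProd ρ i k2 = ρ (i + 1) * rhoProd ρ (i + 1) k2 := by
      rw [rhoProd_mul ρ (Nat.le_succ i) hk2ge, rhoProd_succ]
    have hqpos : 0 < rhoProd ρ (i + 1) k2 := rhoProd_pos hρ _ (by omega)
    -- the first argument of min equals (ρ_{i,k2})⁻¹
    have hfst : barAlpha ρ α n κ (i + 1) / ρ (i + 1) = (rhoProd ρ i k2)⁻¹ := by
      rw [barAlpha, if_neg (by omega), ← hk2, hq, mul_inv, div_eq_mul_inv, mul_comm]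
    rw [hfst]
    by_cases hb : Binding ρ n κ i
    · -- binding case: both sides are 1
      have hki : kmin ρ n κ i = i := by
        have h1 := kmin_le hb (le_refl i)
        have h2 := (kmin_mem (ρ := ρ) (κ := κ) (i := i) hn hκ2 (by omega)).2
        omega
      rw [barAlpha, if_neg (by omega), hki, rhoProd_self, inv_one]
      have hlt1 : rhoProd ρ i k2 < 1 := hb.2.2 k2 hk2ge hk2le
      have hpos : 0 < rhoProd ρ i k2 := by rw [hq]; positivity
      have : 1 ≤ (rhoProd ρ i k2)⁻¹ := by
        have hmc := mul_inv_cancel₀ (ne_of_gt hpos)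
        nlinarith [inv_pos.2 hpos]
      rw [min_eq_right this]
    · -- non-binding case: kmin i = kmin (i+1)
      have hki : kmin ρ n κ i = k2 := by
        obtain ⟨hkb, hkge⟩ := kmin_mem (ρ := ρ) (κ := κ) (i := i) hn hκ2 (by omega)
        have h1 : kmin ρ n κ i ≤ k2 := kmin_le hk2b (by omega)
        have hne : kmin ρ n κ i ≠ i := fun h => hb (h ▸ hkb)
        have h2 : k2 ≤ kmin ρ n κ i := kmin_le hkb (by omega)
        omega
      have hle1 : (rhoProd ρ i k2)⁻¹ ≤ 1 := by
        have h1 : 1 ≤ rhoProd ρ i k2 := by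
          have := one_le_rhoProd_kmin hn hρ hi1 (show i ≤ n - 1 by omega)
          rwa [hki] at this
        have hpos : 0 < rhoProd ρ i k2 := by rw [hq]; positivity
        have hmc := mul_inv_cancel₀ (ne_of_gt hpos)
        nlinarith [inv_pos.2 hpos]
      rw [barAlpha, if_neg (by omega), hki, min_eq_left hle1]
  · -- bounded by 1
    intro i hi
    rcases le_or_gt i κ with hle | hlt
    · rw [barAlpha, if_pos hle]; exact halle i (by omega)
    · have hκ2 : κ ≤ n - 2 := by omega
      rw [barAlpha, if_neg (by omega)]
      have h1 : 1 ≤ rhoProd ρ i (kmin ρ n κ i) := one_le_rhoProd_kmin hn hρ (by omega) hi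
      have hk := kmin_mem (ρ := ρ) (κ := κ) (i := i) hn hκ2 hi
      have hkle : kmin ρ n κ i ≤ n - 1 := hk.1.2.1
      have hpos : 0 < rhoProd ρ i (kmin ρ n κ i) := rhoProd_pos hρ _ (by omega)
      have hmc := mul_inv_cancel₀ (ne_of_gt hpos)
      nlinarith [inv_pos.2 hpos]
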